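/- arXiv:1204.5274 — 6 statements merged into one kernel-verified Lean document; each statement's English description precedes it below -/
import Mathlib

section
/- Let M be a matroid on a ground set S and let A be an n×n matrix with entries in S such that every row and every column of A is a base of M. Then there exists an independent partial transversal of A of size at least ⌈n/2⌉, i.e., a set of cell positions, no two in the same row or column, whose entries form an independent set of size at least ⌈n/2⌉. -/
/-- `A` is a matroidal Latin square of degree `n` over the matroid `M`:
every row and every column consists of distinct elements forming a base of `M`. -/
def IsMLS {α : Type*} (M : Matroid α) (n : ℕ) (A : Fin n → Fin n → α) : Prop :=
  (∀ i, Function.Injective (A i) ∧ M.IsBase (Set.range (A i))) ∧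
  (∀ j, Function.Injective (fun i => A i j) ∧ M.IsBase (Set.range (fun i => A i j)))

/-- `A` has an independent partial transversal of size `k`: `k` cells, no two in the
same row or column, whose entries are distinct and form an independent set in `M`. -/
def HasIPT {α : Type*} (M : Matroid α) (n : ℕ) (A : Fin n → Fin n → α) (k : ℕ) : Prop :=
  ∃ r c : Fin k → Fin n, Function.Injective r ∧ Function.Injective c ∧
    Function.Injective (fun i => A (r i) (c i)) ∧
    M.Indep (Set.range (fun i => A (r i) (c i)))

/-!
Take an independent partial transversal `T` of maximal size `k` and suppose `k < n`. Fix a row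
`i₀` that `T` misses. For every column `j` that `T` misses, `A i₀ j` lies in the closure of `T`,
for otherwise adding the cell `(i₀, j)` would give a larger transversal. These `n - k` entries of
row `i₀` are independent, since the row is a base, and lie in the closure of the `k` entries of
`T`; hence `n - k ≤ k`.
-/

lemma Matroid.Indep.ncard_le_of_subset_closure {α : Type*} {M : Matroid α} {I T : Set α}
    (hI : M.Indep I) (hIT : I ⊆ M.closure T) (hT : T.Finite) : I.ncard ≤ T.ncard := by
  have hle : I.encard ≤ T.encard :=
    (hI.encard_le_eRk_of_subset hIT).trans ((M.eRk_closure_eq T).le.trans (M.eRk_le_encard T))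
  rw [← hT.cast_ncard_eq] at hle
  rw [← (Set.finite_of_encard_le_coe hle).cast_ncard_eq] at hle
  exact_mod_cast hle

section

variable {α : Type*} {M : Matroid α} {n : ℕ} {A : Fin n → Fin n → α}

lemma hasIPT_zero : HasIPT M n A 0 :=
  ⟨Fin.elim0, Fin.elim0, fun a => a.elim0, fun a => a.elim0, fun a => a.elim0,
    by simp [Set.range_eq_empty]⟩

lemma HasIPT.le {k : ℕ} (h : HasIPT M n A k) : k ≤ n := by
  obtain ⟨r, -, hr, -⟩ := h
  simpa using Fintype.card_le_of_injective r hr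

lemma HasIPT.mono {k m : ℕ} (h : HasIPT M n A k) (hm : m ≤ k) : HasIPT M n A m := by
  obtain ⟨r, c, hr, hc, he, hI⟩ := h
  have hcast := Fin.castLE_injective hm
  refine ⟨r ∘ Fin.castLE hm, c ∘ Fin.castLE hm, hr.comp hcast, hc.comp hcast,
    he.comp hcast, hI.subset ?_⟩
  rintro _ ⟨i, rfl⟩
  exact ⟨Fin.castLE hm i, rfl⟩

lemma hasIPT_succ_of_notMem_closure {k : ℕ} {r c : Fin k → Fin n}
    (hr : Function.Injective r) (hc : Function.Injective c)
    (he : Function.Injective (fun l => A (r l) (c l)))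
    (hI : M.Indep (Set.range (fun l => A (r l) (c l))))
    {i j : Fin n} (hi : i ∉ Set.range r) (hj : j ∉ Set.range c)
    (hij : A i j ∈ M.E \ M.closure (Set.range (fun l => A (r l) (c l)))) :
    HasIPT M n A (k + 1) := by
  have hentries : (fun l => A ((Fin.snoc r i : Fin (k + 1) → Fin n) l)
      ((Fin.snoc c j : Fin (k + 1) → Fin n) l)) =
      Fin.snoc (fun l => A (r l) (c l)) (A i j) := by
    funext l
    induction l using Fin.lastCases <;> simp
  have hnew : A i j ∉ Set.range (fun l => A (r l) (c l)) :=
    fun hmem => hij.2 (M.subset_closure _ hI.subset_ground hmem)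
  refine ⟨Fin.snoc r i, Fin.snoc c j, Fin.snoc_injective_of_injective hr hi,
    Fin.snoc_injective_of_injective hc hj, ?_, ?_⟩
  · rw [hentries]
    exact Fin.snoc_injective_of_injective he hnew
  · rw [hentries, Fin.range_snoc, hI.insert_indep_iff_of_notMem hnew]
    exact hij

lemma le_two_mul_of_not_hasIPT_succ
    (hrows : ∀ i, Function.Injective (A i) ∧ M.Indep (Set.range (A i)))
    {k : ℕ} (hk : HasIPT M n A k) (hmax : ¬ HasIPT M n A (k + 1)) : n ≤ 2 * k := by
  obtain ⟨r, c, hr, hc, he, hI⟩ := hk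
  rcases le_or_gt n k with hnk | hkn
  · omega
  obtain ⟨i₀, hi₀⟩ : ∃ i, i ∉ Set.range r := by
    by_contra! hsurj
    have := Fintype.card_le_of_surjective r hsurj
    simp only [Fintype.card_fin] at this
    omega
  have hclosure : A i₀ '' (Set.range c)ᶜ ⊆ M.closure (Set.range (fun l => A (r l) (c l))) := by
    rintro _ ⟨j, hj, rfl⟩
    by_contra hnot
    have hE : A i₀ j ∈ M.E := (hrows i₀).2.subset_ground ⟨j, rfl⟩
    exact hmax (hasIPT_succ_of_notMem_closure hr hc he hI hi₀ hj ⟨hE, hnot⟩)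
  have hcard := ((hrows i₀).2.subset (Set.image_subset_range _ _)).ncard_le_of_subset_closure
    hclosure (Set.finite_range _)
  have hcompl := Set.ncard_add_ncard_compl (Set.range c)
  rw [Set.ncard_image_of_injective _ (hrows i₀).1, Set.ncard_range_of_injective he] at hcard
  simp only [Set.ncard_range_of_injective hc, Nat.card_eq_fintype_card, Fintype.card_fin]
    at hcard hcompl
  omega

end

theorem stmt_3 {α : Type*} (M : Matroid α) (n : ℕ) (A : Fin n → Fin n → α)
    (hA : IsMLS M n A) : HasIPT M n A ((n + 1) / 2) := by
  classical
  set k := Nat.findGreatest (HasIPT M n A) n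
  have hk : HasIPT M n A k := Nat.findGreatest_spec (Nat.zero_le n) hasIPT_zero
  have hmax : ¬ HasIPT M n A (k + 1) := fun h =>
    Nat.findGreatest_is_greatest (Nat.lt_succ_self k) h.le h
  have hn := le_two_mul_of_not_hasIPT_succ (fun i => ⟨(hA.1 i).1, (hA.1 i).2.indep⟩) hk hmax
  exact hk.mono (by omega)
end

section
/- Let v_1, ..., v_n be a basis of a vector space V over a field of characteristic 0 (or characteristic not dividing relevant quantities). Define the n×n matrix A by a_{ii} = v_1 for all i, and a_{ij} = v_i − v_j for i ≠ j. Then every row of A is a basis of V. -/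
/-! Row `i` contains `v₁` and, when `i ≠ 1`, also `vᵢ - v₁`, so its span contains `vᵢ`, and then
every `vⱼ = vᵢ - a_{ij}`. Thus the `n` vectors of the row span the `n`-dimensional space `V`, which
forces them to be linearly independent. -/

open Module Submodule

theorem Module.Basis.span_range_eq_top_of_sub {R V ι : Type*} [Ring R] [AddCommGroup V]
    [Module R V] (v : Basis ι R V) {k i : ι} {r : ι → V} (hdiag : r i = v k)
    (hoff : ∀ j, j ≠ i → r j = v i - v j) :
    span R (Set.range r) = ⊤ := by
  have mem : ∀ j, r j ∈ span R (Set.range r) := fun j => subset_span ⟨j, rfl⟩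
  have hvi : v i ∈ span R (Set.range r) := by
    by_cases hik : i = k
    · simpa [hik, ← hdiag] using mem i
    · simpa [hoff k (Ne.symm hik), hdiag] using add_mem (mem k) (mem i)
  have hv : ∀ j, v j ∈ span R (Set.range r) := by
    intro j
    by_cases hji : j = i
    · exact hji ▸ hvi
    · simpa [hoff j hji] using sub_mem hvi (mem j)
  rw [eq_top_iff, ← v.span_eq, span_le]
  rintro _ ⟨j, rfl⟩
  exact hv j

theorem stmt_9 {V : Type*} [AddCommGroup V] [Module ℚ V] (n : ℕ) (hn : 0 < n)
    (v : Module.Basis (Fin n) ℚ V)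
    (A : Fin n → Fin n → V)
    (hdiag : ∀ i, A i i = v ⟨0, hn⟩)
    (hoff : ∀ i j, i ≠ j → A i j = v i - v j) :
    ∀ i, LinearIndependent ℚ (A i) ∧ Submodule.span ℚ (Set.range (A i)) = ⊤ := by
  intro i
  have spans : span ℚ (Set.range (A i)) = ⊤ :=
    v.span_range_eq_top_of_sub (hdiag i) fun j hji => hoff i j (Ne.symm hji)
  refine ⟨linearIndependent_of_top_le_span_of_card_eq_finrank spans.ge ?_, spans⟩
  rw [finrank_eq_card_basis v]
end

section
/- Let v_1, ..., v_n be a basis of a vector space V over ℚ and define the matrix A by a_{ii} = v_1 and a_{ij} = v_i − v_j for i ≠ j. Then for every permutation σ of {1, ..., n}, the family (a_{i,σ(i)})_{i=1}^n is linearly dependent. Hence A has no independent transversal of size n. -/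
/-!
If σ = 1 the transversal is the constant family v₁, repeated n ≥ 2 times. Otherwise every
non-fixed point i contributes v_i − v_{σ(i)}, and these differences telescope along the cycles
of σ: their sum is zero, a nontrivial linear relation.
-/

theorem Equiv.Perm.sum_sub_apply_eq_zero {ι M : Type*} [Fintype ι] [AddCommGroup M]
    (σ : Equiv.Perm ι) (w : ι → M) : ∑ i, (w i - w (σ i)) = 0 := by
  rw [Finset.sum_sub_distrib, Equiv.sum_comp σ w, sub_self]

theorem Equiv.Perm.not_linearIndependent_of_eq_sub_apply {ι R M : Type*} [Fintype ι]
    [Ring R] [Nontrivial R] [AddCommGroup M] [Module R M] {σ : Equiv.Perm ι} (hσ : σ ≠ 1)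
    {f w : ι → M} (hf : ∀ i, σ i ≠ i → f i = w i - w (σ i)) : ¬ LinearIndependent R f := by
  classical
  obtain ⟨i₀, hi₀⟩ : ∃ i, σ i ≠ i := by
    by_contra! h
    exact hσ (Equiv.ext h)
  rw [Fintype.not_linearIndependent_iff]
  refine ⟨fun i => if σ i = i then 0 else 1, ?_, i₀, by simp [hi₀]⟩
  calc ∑ i, (if σ i = i then (0 : R) else 1) • f i = ∑ i, (w i - w (σ i)) := by
        refine Finset.sum_congr rfl fun i _ => ?_
        by_cases hi : σ i = i
        · simp [hi]
        · simp [hi, hf i hi]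
    _ = 0 := σ.sum_sub_apply_eq_zero w

theorem stmt_11 {V : Type*} [AddCommGroup V] [Module ℚ V] (n : ℕ) (hn : 2 ≤ n)
    (v : Module.Basis (Fin n) ℚ V)
    (A : Fin n → Fin n → V)
    (hdiag : ∀ i, A i i = v ⟨0, by omega⟩)
    (hoff : ∀ i j, i ≠ j → A i j = v i - v j) :
    ∀ σ : Equiv.Perm (Fin n), ¬ LinearIndependent ℚ (fun i => A i (σ i)) := by
  intro σ
  by_cases hσ : σ = 1
  · subst hσ
    intro hli
    have h01 : (⟨0, by omega⟩ : Fin n) = ⟨1, by omega⟩ := hli.injective (by simp [hdiag])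
    simp at h01
  · exact Equiv.Perm.not_linearIndependent_of_eq_sub_apply hσ fun i hi => hoff i (σ i) hi.symm
end

section
/- Let σ be a permutation of {1, ..., n} with exactly one fixed point i_0, and let v_1, ..., v_n be a basis of V. Define w_i = v_1 if i = i_0 and w_i = v_i − v_{σ(i)} otherwise. If i_0 > 1, then v_{i_0} is not in the span of {w_1, ..., w_n}; in particular (w_i) is not a basis and hence, as a family of n vectors in an n-dimensional space, is not linearly independent. -/
theorem stmt_13 {V : Type*} [AddCommGroup V] [Module ℚ V] (n : ℕ) (hn : 2 ≤ n)
    (v : Module.Basis (Fin n) ℚ V) (σ : Equiv.Perm (Fin n)) (i₀ : Fin n)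
    (hfix : σ i₀ = i₀) (hunique : ∀ i, i ≠ i₀ → σ i ≠ i)
    (hi₀ : i₀ ≠ ⟨0, by omega⟩)
    (w : Fin n → V)
    (hw₀ : w i₀ = v ⟨0, by omega⟩)
    (hw : ∀ i, i ≠ i₀ → w i = v i - v (σ i)) :
    v i₀ ∉ Submodule.span ℚ (Set.range w) ∧ ¬ LinearIndependent ℚ w := by
  have key : v i₀ ∉ Submodule.span ℚ (Set.range w) := by
    intro hmem
    have hf : ∀ i, v.coord i₀ (w i) = 0 := by
      intro i
      by_cases hi : i = i₀
      · subst hi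
        rw [hw₀, v.coord_apply, v.repr_self]
        simp [Finsupp.single_apply, Ne.symm hi₀]
      · rw [hw i hi, map_sub, v.coord_apply, v.coord_apply, v.repr_self, v.repr_self]
        have h1 : i ≠ i₀ := hi
        have h2 : σ i ≠ i₀ := fun h => hi (by simpa [h] using σ.injective (h.trans hfix.symm))
        simp [Finsupp.single_apply, h1, h2]
    have hspan : ∀ x ∈ Submodule.span ℚ (Set.range w), v.coord i₀ x = 0 := by
      intro x hx
      refine Submodule.span_induction ?_ (by simp) (fun a b _ _ ha hb => by rw [map_add, ha, hb, add_zero])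
        (fun c a _ ha => by rw [map_smul, ha, smul_zero]) hx
      rintro _ ⟨i, rfl⟩
      exact hf i
    have := hspan _ hmem
    rw [v.coord_apply, v.repr_self] at this
    simp at this
  refine ⟨key, fun hli => key ?_⟩
  have hcard : Fintype.card (Fin n) = Module.finrank ℚ V := by
    simp [Module.finrank_eq_card_basis v]
  haveI : Nonempty (Fin n) := ⟨i₀⟩
  have := hli.span_eq_top_of_card_eq_finrank hcard
  rw [this]
  exact Submodule.mem_top
end

section
/- For every n ≥ 2 there exists an n×n matrix of vectors in ℚ^n whose every row and every column is a basis of ℚ^n, but which admits no transversal (one entry from each row and column) forming a linearly independent family. -/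
/-!
Row `i` of the witness spans: it contains `e₁` and `eᵢ - e₁`, hence `eᵢ`, and then every
`eⱼ = eᵢ - (eᵢ - eⱼ)`. Column `j` is row `j` up to sign, and `n` spanning vectors in `ℚⁿ` are a
basis. A transversal along `σ ≠ 1` contains the vectors `eᵢ - e_{σ i}` for `i` in the support of
`σ`, which sum to zero; the diagonal transversal repeats `e₁`.
-/

open Submodule Set

lemma linearIndependent_of_span_eq_top {K ι : Type*} [Field K] [Fintype ι] {v : ι → ι → K}
    (hv : span K (range v) = ⊤) : LinearIndependent K v :=
  linearIndependent_of_top_le_span_of_card_eq_finrank hv.ge (by simp)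

namespace TransversalWitness

variable {K ι : Type*} [Field K] [DecidableEq ι]

/-- The index `o` plays the role of `e₁`. -/
def witness (o i j : ι) : ι → K :=
  if i = j then Pi.single o 1 else Pi.single i 1 - Pi.single j 1

lemma single_mem_span_witness_row (o i k : ι) :
    (Pi.single k 1 : ι → K) ∈ span K (range (witness o i)) := by
  have mem : ∀ j, witness o i j ∈ span K (range (witness (K := K) o i)) :=
    fun j => subset_span ⟨j, rfl⟩
  have hi : (Pi.single i 1 : ι → K) ∈ span K (range (witness o i)) := by
    by_cases hio : i = o
    · subst hio
      simpa [witness] using mem i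
    · have : (Pi.single i 1 : ι → K) = witness o i i + witness o i o := by
        simp [witness, hio]
      exact this ▸ add_mem (mem i) (mem o)
  by_cases hki : k = i
  · exact hki ▸ hi
  · have : (Pi.single k 1 : ι → K) = Pi.single i 1 - witness o i k := by
      simp [witness, Ne.symm hki]
    exact this ▸ sub_mem hi (mem k)

lemma span_witness_row [Finite ι] (o i : ι) : span K (range (witness (K := K) o i)) = ⊤ := by
  rw [eq_top_iff, ← (Pi.basisFun K ι).span_eq, span_le]
  rintro _ ⟨k, rfl⟩
  simpa using single_mem_span_witness_row o i k

lemma witness_mem_span_column (o i j : ι) :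
    witness o j i ∈ span K (range fun k => witness (K := K) o k j) := by
  by_cases hij : i = j
  · subst hij
    exact subset_span ⟨i, rfl⟩
  · have : witness o j i = -witness (K := K) o i j := by
      simp [witness, hij, Ne.symm hij]
    exact this ▸ neg_mem (subset_span ⟨i, rfl⟩)

lemma span_witness_column [Finite ι] (o j : ι) :
    span K (range fun i => witness (K := K) o i j) = ⊤ := by
  rw [eq_top_iff, ← span_witness_row o j, span_le]
  rintro _ ⟨i, rfl⟩
  exact witness_mem_span_column o i j

lemma sum_support_witness_perm [Fintype ι] (o : ι) (σ : Equiv.Perm ι) :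
    ∑ i ∈ σ.support, witness (K := K) o i (σ i) = 0 := by
  have : ∀ i ∈ σ.support, witness (K := K) o i (σ i) = Pi.single i 1 - Pi.single (σ i) 1 :=
    fun i hi => if_neg fun h => Equiv.Perm.mem_support.1 hi h.symm
  rw [Finset.sum_congr rfl this, Finset.sum_sub_distrib,
    Equiv.Perm.sum_comp σ σ.support (fun i => Pi.single i 1) fun _ => Equiv.Perm.mem_support.2,
    sub_self]

lemma not_linearIndependent_witness_perm [Fintype ι] [Nontrivial ι] (o : ι)
    (σ : Equiv.Perm ι) : ¬ LinearIndependent K fun i => witness (K := K) o i (σ i) := by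
  intro hli
  rcases σ.support.eq_empty_or_nonempty with hσ | ⟨i, hi⟩
  · obtain rfl := Equiv.Perm.support_eq_empty_iff.1 hσ
    obtain ⟨i, j, hij⟩ := exists_pair_ne ι
    exact hij (hli.injective (by simp [witness]))
  · have := linearIndependent_iff'.1 hli σ.support (fun _ => 1)
      (by simpa using sum_support_witness_perm o σ) i hi
    exact one_ne_zero this

end TransversalWitness

open TransversalWitness

theorem stmt_15 (n : ℕ) (hn : 2 ≤ n) :
    ∃ A : Fin n → Fin n → (Fin n → ℚ),
      (∀ i, LinearIndependent ℚ (A i) ∧ Submodule.span ℚ (Set.range (A i)) = ⊤) ∧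
      (∀ j, LinearIndependent ℚ (fun i => A i j) ∧
        Submodule.span ℚ (Set.range (fun i => A i j)) = ⊤) ∧
      (∀ σ : Equiv.Perm (Fin n), ¬ LinearIndependent ℚ (fun i => A i (σ i))) := by
  have : Nontrivial (Fin n) := Fin.nontrivial_iff_two_le.2 hn
  let o : Fin n := ⟨0, by omega⟩
  refine ⟨witness o, fun i => ?_, fun j => ?_, not_linearIndependent_witness_perm o⟩
  · exact ⟨linearIndependent_of_span_eq_top (span_witness_row o i), span_witness_row o i⟩
  · exact ⟨linearIndependent_of_span_eq_top (span_witness_column o j), span_witness_column o j⟩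
end

section
/- Let M be a matroid on ground set S of rank n, and A an n×n matroidal Latin square over M. Suppose T is a maximal independent partial transversal of size t occupying the first t diagonal positions, and let T_E be the minimal subset of T spanning all entries in rows and columns of index > t. Then |T_E| ≥ n − t and |T \ T_E| ≤ 2t − n. -/
open Set

lemma Matroid.Indep.ncard_le_ncard_of_subset_closure {α : Type*} {M : Matroid α} {I X : Set α}
    (hI : M.Indep I) (hIX : I ⊆ M.closure X) (hX : X.Finite) : I.ncard ≤ X.ncard := by
  have hle : I.encard ≤ X.encard :=
    (hI.encard_le_eRk_of_subset hIX).trans ((M.eRk_closure_eq X).trans_le (M.eRk_le_encard X))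
  rw [← Nat.cast_le (α := ℕ∞), hX.cast_ncard_eq, (hX.finite_of_encard_le hle).cast_ncard_eq]
  exact hle

lemma Fin.ncard_image_setOf_val_lt_le {β : Type*} {n : ℕ} (f : Fin n → β) (t : ℕ) :
    (f '' {i : Fin n | (i : ℕ) < t}).ncard ≤ t :=
  (ncard_image_le (toFinite _)).trans <|
    (ncard_le_ncard_of_injOn Fin.val (fun _ hi => hi) Fin.val_injective.injOn (finite_Iio t)).trans
      (ncard_Iio_nat t).le

lemma Fin.ncard_setOf_le_val (n t : ℕ) : {j : Fin n | t ≤ (j : ℕ)}.ncard = n - t := by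
  have hval : Fin.val '' {j : Fin n | t ≤ (j : ℕ)} = Ico t n := by
    ext k
    simp only [mem_image, mem_ofPred_eq, mem_Ico]
    exact ⟨fun ⟨j, hj, hk⟩ => hk ▸ ⟨hj, j.isLt⟩, fun h => ⟨⟨k, h.2⟩, h.1, rfl⟩⟩
  rw [← ncard_image_of_injective _ Fin.val_injective, hval, ncard_eq_toFinset_card',
    toFinset_Ico, Nat.card_Ico]

namespace IsMLS

variable {α : Type*} {M : Matroid α} {n : ℕ} {A : Fin n → Fin n → α}

lemma indep_image_row (hA : IsMLS M n A) (i : Fin n) (s : Set (Fin n)) : M.Indep (A i '' s) :=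
  (hA.1 i).2.indep.subset (image_subset_range _ _)

lemma ncard_image_row (hA : IsMLS M n A) (i : Fin n) (s : Set (Fin n)) :
    (A i '' s).ncard = s.ncard :=
  ncard_image_of_injective s (hA.1 i).1

lemma exists_indep_subset_lowerRight (hA : IsMLS M n A) {t : ℕ} (ht : t < n) :
    ∃ S : Set α, M.Indep S ∧ S.ncard = n - t ∧
      S ⊆ {x | ∃ i j : Fin n, t ≤ (i : ℕ) ∧ t ≤ (j : ℕ) ∧ x = A i j} := by
  refine ⟨A ⟨t, ht⟩ '' {j | t ≤ (j : ℕ)}, hA.indep_image_row _ _, ?_, ?_⟩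
  · rw [hA.ncard_image_row, Fin.ncard_setOf_le_val]
  · rintro _ ⟨j, hj, rfl⟩
    exact ⟨⟨t, ht⟩, j, le_rfl, hj, rfl⟩

end IsMLS

theorem stmt_16_general {α : Type*} (M : Matroid α) (n : ℕ) (A : Fin n → Fin n → α)
    (hA : IsMLS M n A) (t : ℕ)
    (T : Set α) (hTdef : T = {x | ∃ i : Fin n, (i : ℕ) < t ∧ x = A i i})
    (E : Set α) (hEdef : E = {x | ∃ i j : Fin n, t ≤ (i : ℕ) ∧ t ≤ (j : ℕ) ∧ x = A i j})
    -- `T_E` is the minimal subset of `T` spanning `E`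
    (TE : Set α) (hTE : TE ⊆ T) (hspan : E ⊆ M.closure TE) :
    (n : ℤ) - t ≤ TE.ncard ∧ ((T \ TE).ncard : ℤ) ≤ 2 * t - n := by
  have hTim : T = (fun i : Fin n => A i i) '' {i : Fin n | (i : ℕ) < t} := by
    rw [hTdef]
    ext x
    exact ⟨fun ⟨i, hi, hx⟩ => ⟨i, hi, hx.symm⟩, fun ⟨i, hi, hx⟩ => ⟨i, hi, hx.symm⟩⟩
  have hTfin : T.Finite := hTim ▸ (toFinite _).image _
  have hTcard : T.ncard ≤ t := hTim ▸ Fin.ncard_image_setOf_val_lt_le _ t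
  have hTEcard : (n : ℤ) - t ≤ TE.ncard := by
    rcases lt_or_ge t n with hlt | hge
    · obtain ⟨S, hSindep, hScard, hSE⟩ := hA.exists_indep_subset_lowerRight hlt
      have := hSindep.ncard_le_ncard_of_subset_closure
        ((hEdef ▸ hSE).trans hspan) (hTfin.subset hTE)
      omega
    · omega
  have hdiff : (T \ TE).ncard = T.ncard - TE.ncard := ncard_sdiff hTE (hTfin.subset hTE)
  have hTEle : TE.ncard ≤ T.ncard := ncard_le_ncard hTE hTfin
  exact ⟨hTEcard, by omega⟩

theorem stmt_16 {α : Type*} (M : Matroid α) (n : ℕ) (A : Fin n → Fin n → α)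
    (hA : IsMLS M n A) (t : ℕ) (ht : t ≤ n)
    (T : Set α) (hTdef : T = {x | ∃ i : Fin n, (i : ℕ) < t ∧ x = A i i})
    -- the first `t` diagonal cells form an independent partial transversal
    (hinj : ∀ i j : Fin n, (i : ℕ) < t → (j : ℕ) < t → A i i = A j j → i = j)
    (hT : M.Indep T)
    -- maximality of the transversal
    (hmax : ¬∃ i j : Fin n, t ≤ (i : ℕ) ∧ t ≤ (j : ℕ) ∧
      A i j ∉ T ∧ M.Indep (insert (A i j) T))
    (E : Set α) (hEdef : E = {x | ∃ i j : Fin n, t ≤ (i : ℕ) ∧ t ≤ (j : ℕ) ∧ x = A i j})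
    -- `T_E` is the minimal subset of `T` spanning `E`
    (TE : Set α) (hTE : TE ⊆ T) (hspan : E ⊆ M.closure TE)
    (hmin : ∀ T' ⊆ T, E ⊆ M.closure T' → TE ⊆ T') :
    (n : ℤ) - t ≤ TE.ncard ∧ ((T \ TE).ncard : ℤ) ≤ 2 * t - n :=
  stmt_16_general M n A hA t T hTdef E hEdef TE hTE hspan
end
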